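/- arXiv:2304.09250 — 6 statements merged into one kernel-verified Lean document; each statement's English description precedes it below -/
import Mathlib

section
/- Let p < q be primes. The k-th coefficient a_{pq}(k) of the cyclotomic polynomial Φ_{pq} equals 1 if k = up + vq for some u ∈ [0, p_q*-1] and v ∈ [0, q_p*-1]; equals -1 if k = up + vq - pq for some u ∈ [p_q*, q-1] and v ∈ [q_p*, p-1]; and equals 0 otherwise. -/
/-!
Put `a = p_q*` and `b = q_p*`; the congruences and the bounds on `a`, `b` force
`p a + q b = p q + 1`. With `A = ∑_{u < a, v < b} X^(u p + v q)` and
`B = ∑_{a ≤ u < q, b ≤ v < p} X^(u p + v q)`, geometric sums give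
`(X^p - 1)(X^q - 1) A = (X^(p a) - 1)(X^(q b) - 1)` and
`(X^p - 1)(X^q - 1) B = (X^(p q) - X^(p a))(X^(p q) - X^(q b))`. Comparing with
`(X^p - 1)(X^q - 1) Φ_{pq} = (X^(p q) - 1)(X - 1)` yields `X^(p q) Φ_{pq} = X^(p q) A - B`.
Since `u p + v q` determines `(u, v)` once `v < p`, the monomials of `A` (and of `B`) are
distinct, and no exponent of `B` is `p q` plus an exponent of `A`.
-/

open Polynomial Finset

theorem Nat.mul_add_mul_eq_mul_add_one {p q a b : ℕ} (hco : p.Coprime q) (ha₁ : 1 ≤ a)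
    (ha₂ : a < q) (hb₁ : 1 ≤ b) (hb₂ : b < p) (ha : p * a ≡ 1 [MOD q])
    (hb : q * b ≡ 1 [MOD p]) : p * a + q * b = p * q + 1 := by
  have hmodq : p * a + q * b ≡ 1 [MOD q] := (Nat.add_mul_mod_self_left (p * a) q b).trans ha
  have hmodp : p * a + q * b ≡ 1 [MOD p] := by
    rw [Nat.ModEq, add_comm]
    exact (Nat.add_mul_mod_self_left (q * b) p a).trans hb
  obtain ⟨c, hc⟩ := (Nat.modEq_iff_dvd' (by nlinarith)).mp
    ((Nat.modEq_and_modEq_iff_modEq_mul hco).mp ⟨hmodp, hmodq⟩).symm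
  have hge : p + q ≤ p * a + q * b := by nlinarith
  have hlt : p * a + q * b < 2 * (p * q) := by nlinarith
  have hc₂ : c < 2 := Nat.lt_of_mul_lt_mul_left (a := p * q) (by omega)
  have hc₀ : c ≠ 0 := by rintro rfl; omega
  obtain rfl : c = 1 := by omega
  omega

theorem Nat.injOn_mul_add_mul {p q : ℕ} (hco : p.Coprime q) :
    Set.InjOn (fun uv : ℕ × ℕ => uv.1 * p + uv.2 * q) {uv | uv.2 < p} := by
  rintro ⟨u, v⟩ (hv : v < p) ⟨u', v'⟩ (hv' : v' < p) (h : u * p + v * q = u' * p + v' * q)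
  have hmod : v * q ≡ v' * q [MOD p] := by
    simpa [Nat.ModEq, Nat.add_mod] using congrArg (· % p) h
  obtain rfl : v = v' := (Nat.ModEq.cancel_right_of_coprime hco hmod).eq_of_lt_of_lt hv hv'
  obtain rfl : u = u' := Nat.eq_of_mul_eq_mul_right (by omega : 0 < p) (by omega)
  rfl

theorem Polynomial.X_pow_sub_one_mul_X_pow_sub_one_mul_cyclotomic {p q : ℕ} (hp : p.Prime)
    (hq : q.Prime) (hpq : p ≠ q) (R : Type*) [CommRing R] :
    (X ^ p - 1) * (X ^ q - 1) * cyclotomic (p * q) R = (X ^ (p * q) - 1) * (X - 1) := by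
  have := Fact.mk hq
  have hexpand : expand R p (cyclotomic q R) * (X ^ p - 1) = X ^ (p * q) - 1 := by
    simpa [← pow_mul, mul_comm] using congrArg (expand R p) (cyclotomic_prime_mul_X_sub_one R q)
  rw [cyclotomic_expand_eq_cyclotomic_mul hp (mt (Nat.prime_dvd_prime_iff_eq hp hq).mp hpq)]
    at hexpand
  rw [← hexpand, ← cyclotomic_prime_mul_X_sub_one R q, mul_comm q p]
  ring

theorem Finset.sum_product_pow_mul_add_mul {R : Type*} [CommSemiring R] (x : R)
    (s t : Finset ℕ) (p q : ℕ) :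
    ∑ uv ∈ s ×ˢ t, x ^ (uv.1 * p + uv.2 * q) =
      (∑ u ∈ s, (x ^ p) ^ u) * ∑ v ∈ t, (x ^ q) ^ v := by
  rw [sum_mul_sum, sum_product]
  refine sum_congr rfl fun u _ => sum_congr rfl fun v _ => ?_
  rw [pow_add, pow_mul', pow_mul']

theorem Polynomial.coeff_sum_X_pow_of_injOn {R ι : Type*} [Semiring R] {s : Finset ι}
    {f : ι → ℕ} (hf : Set.InjOn f s) (n : ℕ) :
    (∑ i ∈ s, (X : R[X]) ^ f i).coeff n = if n ∈ s.image f then 1 else 0 := by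
  rw [← sum_image (f := fun m => (X : R[X]) ^ m) hf, finsetSum_coeff]
  simp only [coeff_X_pow, sum_ite_eq]

theorem Polynomial.cyclotomic_mul_X_pow_eq {p q a b : ℕ} (hp : p.Prime) (hq : q.Prime)
    (hpq : p ≠ q) (ha : a ≤ q) (hb : b ≤ p) (hab : p * a + q * b = p * q + 1)
    (R : Type*) [CommRing R] :
    cyclotomic (p * q) R * X ^ (p * q) =
      X ^ (p * q) * ∑ uv ∈ range a ×ˢ range b, (X : R[X]) ^ (uv.1 * p + uv.2 * q) -
        ∑ uv ∈ Ico a q ×ˢ Ico b p, (X : R[X]) ^ (uv.1 * p + uv.2 * q) := by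
  have hmonic {n : ℕ} (hn : n ≠ 0) : ((X : R[X]) ^ n - 1).Monic := by
    simpa using monic_X_pow_sub_C (1 : R) hn
  refine ((hmonic hp.ne_zero).mul (hmonic hq.ne_zero)).isRegular.right ?_
  beta_reduce
  have hpos : (∑ uv ∈ range a ×ˢ range b, (X : R[X]) ^ (uv.1 * p + uv.2 * q)) *
      ((X ^ p - 1) * (X ^ q - 1)) = ((X ^ p) ^ a - 1) * ((X ^ q) ^ b - 1) := by
    rw [sum_product_pow_mul_add_mul, mul_mul_mul_comm, geom_sum_mul, geom_sum_mul]
  have hneg : (∑ uv ∈ Ico a q ×ˢ Ico b p, (X : R[X]) ^ (uv.1 * p + uv.2 * q)) *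
      ((X ^ p - 1) * (X ^ q - 1)) =
        (X ^ (p * q) - (X ^ p) ^ a) * (X ^ (p * q) - (X ^ q) ^ b) := by
    rw [sum_product_pow_mul_add_mul, mul_mul_mul_comm, geom_sum_Ico_mul _ ha,
      geom_sum_Ico_mul _ hb, ← pow_mul X p q, ← pow_mul X q p, mul_comm q p]
  have hexp : ((X : R[X]) ^ p) ^ a * (X ^ q) ^ b = X ^ (p * q) * X := by
    rw [← pow_mul, ← pow_mul, ← pow_add, hab, pow_succ]
  linear_combination X ^ (p * q) * X_pow_sub_one_mul_X_pow_sub_one_mul_cyclotomic hp hq hpq R -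
    X ^ (p * q) * hpos + hneg + (1 - X ^ (p * q)) * hexp

theorem Polynomial.coeff_cyclotomic_mul_prime_mul_prime {p q a b : ℕ} (hp : p.Prime)
    (hq : q.Prime) (hpq : p ≠ q) (ha : a ≤ q) (hb : b ≤ p) (hab : p * a + q * b = p * q + 1)
    (R : Type*) [CommRing R] (k : ℕ) :
    (cyclotomic (p * q) R).coeff k =
      (if k ∈ (range a ×ˢ range b).image (fun uv => uv.1 * p + uv.2 * q) then 1 else 0) -
        if k + p * q ∈ (Ico a q ×ˢ Ico b p).image (fun uv => uv.1 * p + uv.2 * q) then 1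
        else 0 := by
  have hinj := Nat.injOn_mul_add_mul ((Nat.coprime_primes hp hq).mpr hpq)
  rw [← coeff_mul_X_pow, cyclotomic_mul_X_pow_eq hp hq hpq ha hb hab, coeff_sub, coeff_X_pow_mul,
    coeff_sum_X_pow_of_injOn (hinj.mono _), coeff_sum_X_pow_of_injOn (hinj.mono _)]
  · exact fun uv huv => (mem_Ico.mp (mem_product.mp huv).2).2
  · exact fun uv huv => (mem_range.mp (mem_product.mp huv).2).trans_le hb

theorem Nat.mul_add_mul_add_mul_ne {p q u v u' v' : ℕ} (hco : p.Coprime q) (hv : v < p)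
    (hu' : u' < q) (hv' : v' < p) : u * p + v * q + p * q ≠ u' * p + v' * q := by
  intro h
  have := Nat.injOn_mul_add_mul hco (x₁ := (u + q, v)) (x₂ := (u', v')) hv hv'
    (by simp only; linarith)
  simp only [Prod.mk.injEq] at this
  omega

theorem mem_image_range_product_range_iff {p q a b k : ℕ} (ha : 1 ≤ a) (hb : 1 ≤ b) :
    k ∈ (range a ×ˢ range b).image (fun uv => uv.1 * p + uv.2 * q) ↔
      ∃ u v : ℕ, u ≤ a - 1 ∧ v ≤ b - 1 ∧ k = u * p + v * q := by
  simp only [mem_image, mem_product, mem_range, Prod.exists]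
  exact exists₂_congr fun u v => by omega

theorem add_mul_mem_image_Ico_product_Ico_iff {p q a b k : ℕ} (hp : 1 ≤ p) (hq : 1 ≤ q) :
    k + p * q ∈ (Ico a q ×ˢ Ico b p).image (fun uv => uv.1 * p + uv.2 * q) ↔
      ∃ u v : ℕ, a ≤ u ∧ u ≤ q - 1 ∧ b ≤ v ∧ v ≤ p - 1 ∧
        (k : ℤ) = u * p + v * q - p * q := by
  simp only [mem_image, mem_product, mem_Ico, Prod.exists]
  exact exists₂_congr fun u v => by omega

/-- Lam–Leung: the coefficients of `Φ_{pq}`. Here `a = p_q*` is the inverse of `p`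
modulo `q` in `[1, q-1]` and `b = q_p*` is the inverse of `q` modulo `p` in `[1, p-1]`. -/
theorem stmt_1 (p q a b : ℕ) (hp : p.Prime) (hq : q.Prime) (hpq : p < q)
    (ha1 : 1 ≤ a) (ha2 : a ≤ q - 1) (ha : p * a ≡ 1 [MOD q])
    (hb1 : 1 ≤ b) (hb2 : b ≤ p - 1) (hb : q * b ≡ 1 [MOD p]) (k : ℕ) :
    ((∃ u v : ℕ, u ≤ a - 1 ∧ v ≤ b - 1 ∧ k = u * p + v * q) →
        (cyclotomic (p * q) ℤ).coeff k = 1) ∧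
    ((∃ u v : ℕ, a ≤ u ∧ u ≤ q - 1 ∧ b ≤ v ∧ v ≤ p - 1 ∧
        (k : ℤ) = u * p + v * q - p * q) →
        (cyclotomic (p * q) ℤ).coeff k = -1) ∧
    ((¬ (∃ u v : ℕ, u ≤ a - 1 ∧ v ≤ b - 1 ∧ k = u * p + v * q)) →
     (¬ (∃ u v : ℕ, a ≤ u ∧ u ≤ q - 1 ∧ b ≤ v ∧ v ≤ p - 1 ∧
        (k : ℤ) = u * p + v * q - p * q)) →
        (cyclotomic (p * q) ℤ).coeff k = 0) := by
  have hco : p.Coprime q := (Nat.coprime_primes hp hq).mpr hpq.ne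
  have haq : a < q := by omega
  have hbp : b < p := by omega
  have hab := Nat.mul_add_mul_eq_mul_add_one hco ha1 haq hb1 hbp ha hb
  have hdisj : k ∈ (range a ×ˢ range b).image (fun uv => uv.1 * p + uv.2 * q) →
      k + p * q ∉ (Ico a q ×ˢ Ico b p).image (fun uv => uv.1 * p + uv.2 * q) := by
    simp only [mem_image, mem_product, mem_range, mem_Ico, Prod.exists]
    rintro ⟨u, v, ⟨-, hv⟩, rfl⟩ ⟨u', v', ⟨⟨-, hu'⟩, -, hv'⟩, h⟩
    exact Nat.mul_add_mul_add_mul_ne hco (hv.trans hbp) hu' hv' h.symm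
  have hpos := mem_image_range_product_range_iff (p := p) (q := q) (k := k) ha1 hb1
  have hneg :=
    add_mul_mem_image_Ico_product_Ico_iff (a := a) (b := b) (k := k) hp.one_le hq.one_le
  rw [coeff_cyclotomic_mul_prime_mul_prime hp hq hpq.ne haq.le hbp.le hab]
  refine ⟨fun h => ?_, fun h => ?_, fun h₁ h₂ => ?_⟩
  · simp [hpos.mpr h, hdisj (hpos.mpr h)]
  · have hP : k ∉ _ := fun hk => hdisj hk (hneg.mpr h)
    simp [hneg.mpr h, hP]
  · simp [mt hpos.mp h₁, mt hneg.mp h₂]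
end

section
/- If n has at most two distinct odd prime factors, then the height A(n) of the n-th cyclotomic polynomial equals 1. In particular, for distinct primes p < q, every coefficient of Φ_{pq} lies in {-1, 0, 1}. -/
/-!
A polynomial is flat when all its coefficients lie in `{-1, 0, 1}`. Flatness is preserved by
`f ↦ f(X^p)` and by `f ↦ ±f(-X)`, which relate `Φ_{pm}` to `Φ_m` when `p ∣ m` and `Φ_{2m}`
to `Φ_m` when `m` is odd. This reduces the theorem to `n = 1`, `n = p` and `n = pq` with
`p ≠ q` primes.
For the last case choose `r ≤ q`, `s ≤ p` with `pr + qs = pq + 1`; then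
`Φ_{pq} = (∑_{i<r} X^{pi})(∑_{j<s} X^{qj}) - X (∑_{i<q-r} X^{pi})(∑_{j<p-s} X^{qj})`
(Lam–Leung), and since `q ∤ p`, the exponents `pi + qj` with `i < q` are pairwise distinct, so
each product is a sum of distinct monomials.
-/

open Polynomial Finset

/-- The height of the `n`-th cyclotomic polynomial. -/
noncomputable def cycHeight (n : ℕ) : ℕ :=
  (cyclotomic n ℤ).support.sup fun k => ((cyclotomic n ℤ).coeff k).natAbs

namespace Polynomial

def IsFlat (f : ℤ[X]) : Prop := ∀ k, (f.coeff k).natAbs ≤ 1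

theorem IsFlat.expand {f : ℤ[X]} (hf : f.IsFlat) {p : ℕ} (hp : 0 < p) :
    (expand ℤ p f).IsFlat := by
  intro k
  rw [coeff_expand hp]
  split_ifs
  · exact hf _
  · simp

theorem IsFlat.comp_neg_X {f : ℤ[X]} (hf : f.IsFlat) : (f.comp (-X)).IsFlat := by
  intro k
  rw [show (-X : ℤ[X]) = C (-1) * X by simp, comp_C_mul_X_coeff, Int.natAbs_mul,
    Int.natAbs_pow, Int.natAbs_neg, Int.natAbs_one, one_pow, mul_one]
  exact hf k

theorem IsFlat.neg_one_pow_mul {f : ℤ[X]} (hf : f.IsFlat) (n : ℕ) : ((-1) ^ n * f).IsFlat := by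
  rcases neg_one_pow_eq_or ℤ[X] n with h | h <;> simpa [h, IsFlat] using hf

theorem coeff_sum_X_pow (s : Finset ℕ) (k : ℕ) :
    (∑ i ∈ s, (X : ℤ[X]) ^ i).coeff k = if k ∈ s then 1 else 0 := by
  simp [coeff_X_pow]

theorem isFlat_sum_X_pow_sub_sum_X_pow {ι κ : Type*} {s : Finset ι} {t : Finset κ}
    {f : ι → ℕ} {g : κ → ℕ} (hf : Set.InjOn f s) (hg : Set.InjOn g t) :
    (∑ x ∈ s, (X : ℤ[X]) ^ f x - ∑ y ∈ t, (X : ℤ[X]) ^ g y).IsFlat := by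
  classical
  intro k
  rw [← sum_image hf, ← sum_image hg, coeff_sub, coeff_sum_X_pow, coeff_sum_X_pow]
  split_ifs <;> simp

theorem sum_range_product_X_pow_mul {R : Type*} [CommRing R] (a b c d : ℕ) :
    (∑ x ∈ range a ×ˢ range b, (X : R[X]) ^ (c * x.1 + d * x.2)) *
      ((X ^ c - 1) * (X ^ d - 1)) = (X ^ (c * a) - 1) * (X ^ (d * b) - 1) := by
  simp only [sum_product, pow_add, pow_mul, ← mul_sum, ← sum_mul]
  rw [mul_mul_mul_comm, geom_sum_mul, geom_sum_mul]

end Polynomial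

theorem Nat.injOn_mul_add_mul_s2 {p q m n : ℕ} (hpq : p.Coprime q) (hm : m ≤ q) :
    Set.InjOn (fun x : ℕ × ℕ => p * x.1 + q * x.2) ↑(range m ×ˢ range n) := by
  rintro ⟨i, j⟩ hij ⟨i', j'⟩ hij' h
  simp only [coe_product, coe_range, Set.mem_prod, Set.mem_Iio] at hij hij' h
  have hmod : p * i ≡ p * i' [MOD q] := by
    simpa [Nat.ModEq, Nat.add_mul_mod_self_left] using congrArg (· % q) h
  obtain rfl : i = i' :=
    (hmod.cancel_left_of_coprime hpq.symm).eq_of_lt_of_lt (by omega) (by omega)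
  obtain rfl : j = j' := Nat.eq_of_mul_eq_mul_left (by omega) (Nat.add_left_cancel h)
  rfl

theorem Nat.exists_mul_add_mul_eq_mul_add_one {p q : ℕ} (hpq : p.Coprime q) (hq : 1 < q) :
    ∃ r ≤ q, ∃ s ≤ p, p * r + q * s = p * q + 1 := by
  obtain ⟨r, hrq, hr⟩ := exists_mul_mod_eq_one_of_coprime hpq hq
  have hdiv := Nat.div_add_mod (p * r) q
  have hpr : p * r ≤ p * q := Nat.mul_le_mul_left p hrq.le
  refine ⟨r, hrq.le, p - p * r / q, Nat.sub_le _ _, ?_⟩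
  rw [Nat.mul_sub, mul_comm q p]
  omega

theorem cyclotomic_two_mul_of_odd {n : ℕ} (hn : Odd n) :
    cyclotomic (2 * n) ℤ = (-1) ^ n.totient * (cyclotomic n ℤ).comp (-X) := by
  set ζ := Complex.exp (2 * Real.pi * Complex.I / n)
  have hζ : IsPrimitiveRoot ζ n := Complex.isPrimitiveRoot_exp n hn.pos.ne'
  have hnegζ : IsPrimitiveRoot (-ζ) (2 * n) := by
    convert IsPrimitiveRoot.orderOf (-ζ)
    rw [neg_eq_neg_one_mul, (Commute.all _ _).orderOf_mul_eq_mul_orderOf_of_coprime]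
    · simp [hζ.eq_orderOf]
    · simp [← hζ.eq_orderOf, hn]
  apply map_injective (Int.castRingHom ℚ) Int.cast_injective
  rw [map_cyclotomic_int, cyclotomic_eq_minpoly_rat hnegζ (by have := hn.pos; omega), minpoly.neg,
    ← cyclotomic_eq_minpoly_rat hζ hn.pos, natDegree_cyclotomic]
  simp [map_comp]

theorem cyclotomic_prime_mul_prime_mul_X_pow_sub_one {p q : ℕ} (hp : p.Prime) (hq : q.Prime)
    (hpq : p ≠ q) :
    cyclotomic (p * q) ℤ * ((X ^ p - 1) * (X ^ q - 1)) = (X ^ (p * q) - 1) * (X - 1) := by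
  have : Fact q.Prime := ⟨hq⟩
  have hexp := cyclotomic_expand_eq_cyclotomic_mul hp
    (fun h => hpq ((Nat.prime_dvd_prime_iff_eq hp hq).mp h)) ℤ
  have hq1 := cyclotomic_prime_mul_X_sub_one ℤ q
  have hpq1 : expand ℤ p (cyclotomic q ℤ * (X - 1)) = X ^ (p * q) - 1 := by
    rw [hq1]; simp [pow_mul]
  rw [map_mul, hexp] at hpq1
  rw [← hpq1, mul_comm q p, ← hq1]
  simp
  ring

theorem cyclotomic_prime_mul_prime_eq_sub {p q r s : ℕ} (hp : p.Prime) (hq : q.Prime)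
    (hpq : p ≠ q) (hr : r ≤ q) (hs : s ≤ p) (h : p * r + q * s = p * q + 1) :
    cyclotomic (p * q) ℤ = ∑ x ∈ range r ×ˢ range s, X ^ (p * x.1 + q * x.2) -
      ∑ x ∈ range (q - r) ×ˢ range (p - s), X ^ (p * x.1 + q * x.2 + 1) := by
  have hne : ((X : ℤ[X]) ^ p - 1) * (X ^ q - 1) ≠ 0 :=
    mul_ne_zero (X_pow_sub_C_ne_zero hp.pos 1) (X_pow_sub_C_ne_zero hq.pos 1)
  refine mul_right_cancel₀ hne ?_
  simp_rw [pow_succ _ (_ + _), ← sum_mul]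
  rw [cyclotomic_prime_mul_prime_mul_X_pow_sub_one hp hq hpq, sub_mul (∑ x ∈ _, _),
    mul_right_comm _ X, sum_range_product_X_pow_mul, sum_range_product_X_pow_mul]
  have hqs : q * s ≤ q * p := Nat.mul_le_mul_left q hs
  have hpr : p * r ≤ p * q := Nat.mul_le_mul_left p hr
  obtain ⟨a, ha⟩ : ∃ a, p * r = a + 1 := ⟨p * r - 1, by rw [mul_comm q p] at hqs; omega⟩
  obtain ⟨b, hb⟩ : ∃ b, q * s = b + 1 := ⟨q * s - 1, by omega⟩
  have hpq' : p * q = a + b + 1 := by omega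
  have hqr : p * (q - r) = b := by rw [Nat.mul_sub]; omega
  have hps : q * (p - s) = a := by rw [Nat.mul_sub, mul_comm q p]; omega
  rw [hqr, hps, hpq', ha, hb]
  ring

theorem isFlat_cyclotomic_prime_mul_prime {p q : ℕ} (hp : p.Prime) (hq : q.Prime)
    (hpq : p ≠ q) : (cyclotomic (p * q) ℤ).IsFlat := by
  have hcop : p.Coprime q := (Nat.coprime_primes hp hq).mpr hpq
  obtain ⟨r, hr, s, hs, h⟩ := Nat.exists_mul_add_mul_eq_mul_add_one hcop hq.one_lt
  rw [cyclotomic_prime_mul_prime_eq_sub hp hq hpq hr hs h]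
  exact isFlat_sum_X_pow_sub_sum_X_pow (Nat.injOn_mul_add_mul_s2 hcop hr)
    ((add_left_injective 1).comp_injOn (Nat.injOn_mul_add_mul_s2 hcop (Nat.sub_le q r)))

theorem isFlat_cyclotomic_prime {p : ℕ} (hp : p.Prime) : (cyclotomic p ℤ).IsFlat := by
  have : Fact p.Prime := ⟨hp⟩
  intro k
  rw [cyclotomic_prime, coeff_sum_X_pow]
  split_ifs <;> simp

theorem isFlat_cyclotomic_one : (cyclotomic 1 ℤ).IsFlat := by
  intro k
  rw [cyclotomic_one, coeff_sub, coeff_X, coeff_one]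
  split_ifs <;> simp

theorem isFlat_cyclotomic_of_squarefree {n : ℕ} (hn : Squarefree n)
    (hcard : n.primeFactors.card ≤ 2) : (cyclotomic n ℤ).IsFlat := by
  rw [← Nat.prod_primeFactors_of_squarefree hn]
  interval_cases h : n.primeFactors.card
  · rw [card_eq_zero.mp h, prod_empty]
    exact isFlat_cyclotomic_one
  · obtain ⟨p, hp⟩ := card_eq_one.mp h
    have hpp : p.Prime := Nat.prime_of_mem_primeFactors (n := n) (by simp [hp])
    rw [hp, prod_singleton]
    exact isFlat_cyclotomic_prime hpp
  · obtain ⟨p, q, hpq, hpq'⟩ := card_eq_two.mp h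
    have hpp : p.Prime := Nat.prime_of_mem_primeFactors (n := n) (by simp [hpq'])
    have hqp : q.Prime := Nat.prime_of_mem_primeFactors (n := n) (by simp [hpq'])
    rw [hpq', prod_pair hpq]
    exact isFlat_cyclotomic_prime_mul_prime hpp hqp hpq

theorem isFlat_cyclotomic_of_card_odd_primeFactors_le_two {n : ℕ} (hn : 0 < n)
    (hcard : (n.primeFactors.filter fun p => Odd p).card ≤ 2) : (cyclotomic n ℤ).IsFlat := by
  induction n using Nat.strong_induction_on with | _ n ih => ?_
  have ih' : ∀ m < n, m ∣ n → (cyclotomic m ℤ).IsFlat := fun m hm hmn =>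
    ih m hm (Nat.pos_of_dvd_of_pos hmn hn) <| (card_le_card <| filter_subset_filter _ <|
      Nat.primeFactors_mono hmn hn.ne').trans hcard
  by_cases hsq : Squarefree n
  · rcases Nat.even_or_odd n with ⟨m, rfl⟩ | hodd
    · have hm : Odd m := by
        rcases Nat.even_or_odd m with ⟨k, rfl⟩ | hm
        · exact absurd (hsq 2 ⟨k, by ring⟩) (by simp)
        · exact hm
      rw [← two_mul, cyclotomic_two_mul_of_odd hm]
      exact ((ih' m (by omega) (Dvd.intro_left 2 (two_mul m))).comp_neg_X).neg_one_pow_mul _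
    · refine isFlat_cyclotomic_of_squarefree hsq (le_of_eq_of_le ?_ hcard)
      rw [filter_true_of_mem fun p hp => hodd.of_dvd_nat (Nat.dvd_of_mem_primeFactors hp)]
  · obtain ⟨p, hp, hpp⟩ : ∃ p, p.Prime ∧ p * p ∣ n := by
      simpa [Nat.squarefree_iff_prime_squarefree] using hsq
    obtain ⟨m, rfl⟩ := dvd_trans (dvd_mul_right p p) hpp
    have hpm : p ∣ m := Nat.dvd_of_mul_dvd_mul_left hp.pos hpp
    have hm : m < p * m := (Nat.lt_mul_iff_one_lt_left (Nat.pos_of_mul_pos_left hn)).mpr hp.one_lt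
    rw [mul_comm, ← cyclotomic_expand_eq_cyclotomic hp hpm ℤ]
    exact (ih' m hm (dvd_mul_left m p)).expand hp.pos

theorem cycHeight_eq_one_of_isFlat {n : ℕ} (h : (cyclotomic n ℤ).IsFlat) : cycHeight n = 1 := by
  refine le_antisymm (Finset.sup_le fun k _ => h k) ?_
  have hlead := (cyclotomic.monic n ℤ).coeff_natDegree
  calc 1 = ((cyclotomic n ℤ).coeff (cyclotomic n ℤ).natDegree).natAbs := by rw [hlead]; rfl
    _ ≤ cycHeight n := Finset.le_sup (f := fun k => ((cyclotomic n ℤ).coeff k).natAbs)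
          (mem_support_iff.mpr (by simp [hlead]))

/-- If `n` has at most two distinct odd prime factors, then `A(n) = 1`.
In particular, for distinct primes `p < q`, every coefficient of `Φ_{pq}`
lies in `{-1, 0, 1}`. -/
theorem stmt_2 :
    (∀ n : ℕ, 0 < n → (n.primeFactors.filter fun p => Odd p).card ≤ 2 →
      cycHeight n = 1) ∧
    (∀ p q : ℕ, p.Prime → q.Prime → p < q → ∀ k : ℕ,
      (cyclotomic (p * q) ℤ).coeff k ∈ ({-1, 0, 1} : Set ℤ)) := by
  refine ⟨fun n hn hcard => cycHeight_eq_one_of_isFlat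
    (isFlat_cyclotomic_of_card_odd_primeFactors_le_two hn hcard), fun p q hp hq hpq k => ?_⟩
  have := isFlat_cyclotomic_prime_mul_prime hp hq hpq.ne k
  simp only [Set.mem_insert_iff, Set.mem_singleton_iff]
  omega
end

section
/- Let p < q < r be primes. Then Φ_{pqr}(x)·(x^{pq} - 1)·(x - 1) = Φ_{pq}(x^r)·(x^p - 1)·(x^q - 1) as polynomials. -/
open Polynomial

/- Expanding `Φ_p · (X - 1) = X^p - 1` by `X ↦ X^q` gives `X^{pq} - 1 = Φ_{pq} · Φ_p · (X^q - 1)`,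
and `Φ_{pq}(X^r) = Φ_{pqr} · Φ_{pq}` since `r ∤ pq`; multiplying out, both sides equal `Φ_{pqr} · Φ_{pq} · (X^p - 1) · (X^q - 1)`. -/

theorem X_pow_mul_sub_one_mul_X_sub_one_eq_cyclotomic_mul (R : Type*) [CommRing R] {p q : ℕ}
    (hp : p.Prime) (hq : q.Prime) (hpq : p ≠ q) :
    (X ^ (p * q) - 1) * (X - 1) = cyclotomic (p * q) R * (X ^ p - 1) * (X ^ q - 1) := by
  have : Fact p.Prime := ⟨hp⟩
  have hqp : ¬ q ∣ p := fun h => hpq ((Nat.prime_dvd_prime_iff_eq hq hp).mp h).symm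
  have hexpand : X ^ (p * q) - 1 = cyclotomic (p * q) R * cyclotomic p R * (X ^ q - 1) := by
    have := congrArg (expand R q) (cyclotomic_prime_mul_X_sub_one R p)
    rwa [map_mul, cyclotomic_expand_eq_cyclotomic_mul hq hqp, map_sub, map_sub, map_pow,
      expand_X, map_one, ← pow_mul, mul_comm q p, eq_comm] at this
  rw [hexpand, ← cyclotomic_prime_mul_X_sub_one R p]
  ring

/-- For primes `p < q < r`,
`Φ_{pqr}(x)·(x^{pq} - 1)·(x - 1) = Φ_{pq}(x^r)·(x^p - 1)·(x^q - 1)`. -/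
theorem stmt_5 (p q r : ℕ) (hp : p.Prime) (hq : q.Prime) (hr : r.Prime)
    (hpq : p < q) (hqr : q < r) :
    cyclotomic (p * q * r) ℤ * (X ^ (p * q) - 1) * (X - 1) =
      (cyclotomic (p * q) ℤ).comp (X ^ r) * (X ^ p - 1) * (X ^ q - 1) := by
  have hr_not_dvd : ¬ r ∣ p * q := by
    rw [hr.dvd_mul, Nat.prime_dvd_prime_iff_eq hr hp, Nat.prime_dvd_prime_iff_eq hr hq]
    omega
  rw [← expand_eq_comp_X_pow, cyclotomic_expand_eq_cyclotomic_mul hr hr_not_dvd, mul_assoc,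
    X_pow_mul_sub_one_mul_X_sub_one_eq_cyclotomic_mul ℤ hp hq hpq.ne]
  ring
end

section
/- Let p < q be primes and r a prime distinct from both. The union over u from 0 to q-1 of the sets {(up + vq)r + 1, ..., (up + vq)r + p} (for any fixed integer v) consists of pq distinct residues and forms a complete residue system modulo pq. -/
/-!
Write `(u p + v q) r + t = u (p r) + t + v q r`. Modulo `p` the term `u (p r)` vanishes, so `t` is
pinned down by its residue, and `p` consecutive values of `t` meet every residue class once.
With `t` fixed, modulo `q` the unit `p r` makes `u ↦ u (p r)` a bijection on residues, so `u`
ranging over `0, …, q - 1` meets every class once. The Chinese remainder theorem for the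
coprime `p`, `q` glues the two.
-/

open Set

namespace Int

theorem ModEq.eq_of_mem_Ico {m s a₁ a₂ : ℤ} (h : a₁ ≡ a₂ [ZMOD m])
    (h₁ : a₁ ∈ Ico s (s + m)) (h₂ : a₂ ∈ Ico s (s + m)) : a₁ = a₂ := by
  obtain ⟨hs₁, hm₁⟩ := h₁
  obtain ⟨hs₂, hm₂⟩ := h₂
  have := eq_zero_of_abs_lt_dvd h.dvd (by rw [abs_lt]; omega)
  omega

theorem exists_mem_Ico_modEq {m : ℤ} (hm : 0 < m) (s a : ℤ) :
    ∃ t ∈ Ico s (s + m), t ≡ a [ZMOD m] := by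
  refine ⟨s + (a - s) % m, ⟨?_, ?_⟩, ?_⟩
  · linarith [emod_nonneg (a - s) hm.ne']
  · linarith [emod_lt_of_pos (a - s) hm]
  · simpa using (mod_modEq (a - s) m).add_left s

theorem exists_mul_modEq_of_isCoprime {a n : ℤ} (han : IsCoprime a n) (c : ℤ) :
    ∃ x, x * a ≡ c [ZMOD n] := by
  obtain ⟨α, β, hαβ⟩ := han
  exact ⟨c * α, modEq_iff_dvd.2 ⟨c * β, by linear_combination (-c) * hαβ⟩⟩

theorem mul_add_modEq_of_dvd {m a : ℤ} (hma : m ∣ a) (u t : ℤ) : u * a + t ≡ t [ZMOD m] :=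
  (modEq_iff_dvd.2 (by simpa using hma.mul_left u)).symm

section ResidueSystem

variable {m n a : ℤ}

theorem eq_of_mul_add_modEq (hma : m ∣ a) (han : IsCoprime a n) {s u₁ u₂ t₁ t₂ : ℤ}
    (hu₁ : u₁ ∈ Ico 0 n) (hu₂ : u₂ ∈ Ico 0 n)
    (ht₁ : t₁ ∈ Ico s (s + m)) (ht₂ : t₂ ∈ Ico s (s + m))
    (h : u₁ * a + t₁ ≡ u₂ * a + t₂ [ZMOD m * n]) : u₁ = u₂ ∧ t₁ = t₂ := by
  have ht : t₁ = t₂ := by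
    refine ModEq.eq_of_mem_Ico ?_ ht₁ ht₂
    calc t₁ ≡ u₁ * a + t₁ [ZMOD m] := (mul_add_modEq_of_dvd hma u₁ t₁).symm
      _ ≡ u₂ * a + t₂ [ZMOD m] := h.of_mul_right n
      _ ≡ t₂ [ZMOD m] := mul_add_modEq_of_dvd hma u₂ t₂
  subst ht
  have hua : n ∣ (u₂ - u₁) * a := by
    rw [sub_mul]
    exact ((h.of_mul_left m).add_right_cancel' t₁).dvd
  have hu : u₁ ≡ u₂ [ZMOD n] := modEq_iff_dvd.2 (han.symm.dvd_of_dvd_mul_right hua)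
  rw [← zero_add n] at hu₁ hu₂
  exact ⟨hu.eq_of_mem_Ico hu₁ hu₂, rfl⟩

theorem exists_mul_add_modEq (hma : m ∣ a) (han : IsCoprime a n) (hm : 0 < m) (hn : 0 < n)
    (s z : ℤ) : ∃ u ∈ Ico 0 n, ∃ t ∈ Ico s (s + m), z ≡ u * a + t [ZMOD m * n] := by
  obtain ⟨t, ht, htz⟩ := exists_mem_Ico_modEq hm s z
  obtain ⟨x, hx⟩ := exists_mul_modEq_of_isCoprime han (z - t)
  obtain ⟨u, hu, hux⟩ := exists_mem_Ico_modEq hn 0 x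
  rw [zero_add] at hu
  refine ⟨u, hu, t, ht, ?_⟩
  have hmodm : z ≡ u * a + t [ZMOD m] :=
    htz.symm.trans (mul_add_modEq_of_dvd hma u t).symm
  have hmodn : z ≡ u * a + t [ZMOD n] :=
    calc z = (z - t) + t := by ring
      _ ≡ x * a + t [ZMOD n] := hx.symm.add_right t
      _ ≡ u * a + t [ZMOD n] := (hux.symm.mul_right a).add_right t
  have hmn : IsCoprime m n := han.of_isCoprime_of_dvd_left hma
  exact modEq_iff_dvd.2 (hmn.mul_dvd hmodm.dvd hmodn.dvd)

end ResidueSystem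

end Int

theorem stmt_7_general (p q r : ℕ) (hp : p.Prime) (hq : q.Prime) (hr : r.Prime)
    (hpq : p < q) (hrq : r ≠ q) (v : ℤ) :
    (∀ u₁ u₂ t₁ t₂ : ℤ, 0 ≤ u₁ → u₁ ≤ q - 1 → 0 ≤ u₂ → u₂ ≤ q - 1 →
      1 ≤ t₁ → t₁ ≤ p → 1 ≤ t₂ → t₂ ≤ p →
      (u₁ * p + v * q) * r + t₁ ≡ (u₂ * p + v * q) * r + t₂ [ZMOD (p * q)] →
      u₁ = u₂ ∧ t₁ = t₂) ∧
    (∀ z : ℤ, ∃ u t : ℤ, 0 ≤ u ∧ u ≤ q - 1 ∧ 1 ≤ t ∧ t ≤ p ∧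
      z ≡ (u * p + v * q) * r + t [ZMOD (p * q)]) := by
  have hcop : IsCoprime ((p : ℤ) * r) q := by
    have : Nat.Coprime (p * r) q := (Nat.coprime_of_lt_prime hp.ne_zero hpq hq).symm.mul_left
      ((Nat.coprime_primes hr hq).2 hrq)
    exact_mod_cast Nat.isCoprime_iff_coprime.2 this
  have hpr : (p : ℤ) ∣ p * r := dvd_mul_right _ _
  have hform (u t : ℤ) : (u * p + v * q) * r + t = u * (p * r) + t + v * q * r := by ring
  refine ⟨fun u₁ u₂ t₁ t₂ hu₁ hu₁' hu₂ hu₂' ht₁ ht₁' ht₂ ht₂' h => ?_, fun z => ?_⟩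
  · rw [hform, hform] at h
    exact Int.eq_of_mul_add_modEq hpr hcop ⟨hu₁, by omega⟩ ⟨hu₂, by omega⟩
      ⟨ht₁, by omega⟩ ⟨ht₂, by omega⟩ (h.add_right_cancel' _)
  · obtain ⟨u, ⟨hu, hu'⟩, t, ⟨ht, ht'⟩, hz⟩ := Int.exists_mul_add_modEq hpr hcop
      (by exact_mod_cast hp.pos) (by exact_mod_cast hq.pos) 1 (z - v * q * r)
    refine ⟨u, t, hu, by omega, ht, by omega, ?_⟩
    rw [hform]
    simpa using hz.add_right (v * q * r)

/-- For primes `p < q` and a prime `r` coprime to `pq`, and any fixed integer `v`,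
the `pq` integers `(up + vq)r + t` with `0 ≤ u ≤ q-1`, `1 ≤ t ≤ p` are pairwise
incongruent modulo `pq` and form a complete residue system modulo `pq`. -/
theorem stmt_7 (p q r : ℕ) (hp : p.Prime) (hq : q.Prime) (hr : r.Prime)
    (hpq : p < q) (hrp : r ≠ p) (hrq : r ≠ q) (v : ℤ) :
    (∀ u₁ u₂ t₁ t₂ : ℤ, 0 ≤ u₁ → u₁ ≤ q - 1 → 0 ≤ u₂ → u₂ ≤ q - 1 →
      1 ≤ t₁ → t₁ ≤ p → 1 ≤ t₂ → t₂ ≤ p →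
      (u₁ * p + v * q) * r + t₁ ≡ (u₂ * p + v * q) * r + t₂ [ZMOD (p * q)] →
      u₁ = u₂ ∧ t₁ = t₂) ∧
    (∀ z : ℤ, ∃ u t : ℤ, 0 ≤ u ∧ u ≤ q - 1 ∧ 1 ≤ t ∧ t ≤ p ∧
      z ≡ (u * p + v * q) * r + t [ZMOD (p * q)]) :=
  stmt_7_general p q r hp hq hr hpq hrq v
end

section
/- Let p < q < r be primes and k an integer. Then Σ_{m ≥ 0} a_{pq}(m)·χ_k(m) = 0, where the sum ranges over all m with 0 ≤ m ≤ φ(pq). -/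
open Polynomial

open Classical in
/-- The function `χ_k(m)` associated to primes `p < q < r`. -/
noncomputable def chi (p q r : ℕ) (k m : ℤ) : ℤ :=
  if ∃ s : ℤ, m * r + q < k + 1 + s * p * q ∧ k + 1 + s * p * q ≤ m * r + q + p then 1
  else if ∃ s : ℤ, m * r < k + 1 + s * p * q ∧ k + 1 + s * p * q ≤ m * r + p then -1
  else 0

/-!
Work in the group ring `ℤ[ℤ/pq]` with `x` the class of `1`. Since `Φ_p(x) = ∑_{j<p} x^j`, the
coefficient of `k` in `x^{rm} Φ_p(x) (x^q - 1)` counts the hits of `k` in a window of length `p`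
starting at `rm + q`, minus those in the one starting at `rm`; each count is `0` or `1`, and the two
windows are disjoint modulo `pq`, so this coefficient is `χ_k(m)`. The sum is therefore the
coefficient of `k` in `Φ_{pq}(x^r) Φ_p(x) (x^q - 1)`, which vanishes: as `r ∤ pq`,
`Φ_{pq}(X^r) = Φ_{pqr}(X) Φ_{pq}(X)`, and `Φ_{pq} Φ_p (X^q - 1) = X^{pq} - 1` kills `x`.
-/

open Finset

namespace Polynomial

theorem cyclotomic_mul_cyclotomic_mul_X_pow_sub_one {p q : ℕ} (hp : p.Prime) (hq : q.Prime)
    (hpq : p ≠ q) (R : Type*) [CommRing R] :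
    cyclotomic (p * q) R * cyclotomic p R * (X ^ q - 1) = X ^ (p * q) - 1 := by
  have := Fact.mk hp
  have hsplit := cyclotomic_expand_eq_cyclotomic_mul hq
    (fun h => hpq ((Nat.prime_dvd_prime_iff_eq hq hp).1 h).symm) R
  have hexpand := congrArg (expand R q) (cyclotomic_prime_mul_X_sub_one R p)
  simp only [map_mul, map_sub, map_pow, expand_X, map_one] at hexpand
  rw [← hsplit, hexpand, ← pow_mul, mul_comm q]

theorem aeval_cyclotomic_dvd_aeval_pow {R A : Type*} [CommRing R] [CommRing A] [Algebra R A]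
    {n r : ℕ} (hr : r.Prime) (hrn : ¬r ∣ n) (x : A) :
    aeval x (cyclotomic n R) ∣ aeval (x ^ r) (cyclotomic n R) := by
  rw [← expand_aeval, cyclotomic_expand_eq_cyclotomic_mul hr hrn, map_mul]
  exact dvd_mul_left _ _

theorem aeval_pow_cyclotomic_mul_eq_zero {R A : Type*} [CommRing R] [CommRing A] [Algebra R A]
    {p q r : ℕ} (hp : p.Prime) (hq : q.Prime) (hr : r.Prime) (hpq : p ≠ q) (hrpq : ¬r ∣ p * q)
    {x : A} (hx : x ^ (p * q) = 1) :
    aeval (x ^ r) (cyclotomic (p * q) R) * aeval x (cyclotomic p R) * (x ^ q - 1) = 0 := by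
  obtain ⟨c, hc⟩ := aeval_cyclotomic_dvd_aeval_pow (R := R) hr hrpq x
  have hvanish := congrArg (aeval x) (cyclotomic_mul_cyclotomic_mul_X_pow_sub_one hp hq hpq R)
  simp only [map_mul, map_sub, map_pow, aeval_X, map_one, hx, sub_self] at hvanish
  rw [hc]
  linear_combination c * hvanish

end Polynomial

def HitsWindow (N w : ℕ) (A k : ℤ) : Prop :=
  ∃ s : ℤ, A < k + 1 + s * N ∧ k + 1 + s * N ≤ A + w

theorem hitsWindow_iff_exists_intCast_eq {N w : ℕ} {A k : ℤ} :
    HitsWindow N w A k ↔ ∃ j ∈ range w, ((A + j : ℤ) : ZMod N) = k := by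
  simp only [HitsWindow, mem_range, ZMod.intCast_eq_intCast_iff_dvd_sub]
  constructor
  · rintro ⟨s, hlo, hhi⟩
    refine ⟨(k + 1 + s * N - A - 1).toNat, by omega, -s, ?_⟩
    rw [Int.toNat_of_nonneg (by omega)]
    ring
  · rintro ⟨j, hj, d, hd⟩
    exact ⟨-d, by linarith, by linarith⟩

open Classical in
theorem sum_ite_intCast_add_eq {N w : ℕ} (hwN : w ≤ N) (A k : ℤ) :
    ∑ j ∈ range w, (if ((A + j : ℤ) : ZMod N) = k then (1 : ℤ) else 0) =
      if HitsWindow N w A k then 1 else 0 := by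
  have hcard : #((range w).filter fun j : ℕ => ((A + j : ℤ) : ZMod N) = k) ≤ 1 := by
    refine card_le_one.2 fun i hi j hj => ?_
    simp only [mem_filter, mem_range] at hi hj
    have hij : ((i : ℕ) : ZMod N) = ((j : ℕ) : ZMod N) := by
      have := hi.2.trans hj.2.symm
      push_cast at this
      exact add_left_cancel this
    rwa [ZMod.natCast_eq_natCast_iff', Nat.mod_eq_of_lt (by omega),
      Nat.mod_eq_of_lt (by omega)] at hij
  rw [sum_boole, hitsWindow_iff_exists_intCast_eq, ← filter_nonempty_iff, ← card_pos]
  split_ifs with h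
  · exact_mod_cast le_antisymm hcard h
  · exact_mod_cast Nat.eq_zero_of_not_pos h

theorem not_hitsWindow_add_and_hitsWindow {N w d : ℕ} (hwd : w ≤ d) (hdN : d + w ≤ N)
    {A k : ℤ} : ¬(HitsWindow N w (A + d) k ∧ HitsWindow N w A k) := by
  rintro ⟨⟨s, hs₁, hs₂⟩, ⟨t, ht₁, ht₂⟩⟩
  have hN : (0 : ℤ) < N := by omega
  have hpos : 0 < (s - t) * N := by nlinarith
  have hst : 1 ≤ s - t := by nlinarith
  nlinarith

open Classical in
theorem chi_eq_sub {p q r : ℕ} (hp : 2 ≤ p) (hpq : p < q) (k m : ℤ) :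
    chi p q r k m = (if HitsWindow (p * q) p (m * r + q) k then 1 else 0) -
      (if HitsWindow (p * q) p (m * r) k then 1 else 0) := by
  have hdisj := not_hitsWindow_add_and_hitsWindow (N := p * q) hpq.le
    (by nlinarith) (A := m * r) (k := k)
  simp only [HitsWindow, Nat.cast_mul, ← mul_assoc] at hdisj ⊢
  unfold chi
  split_ifs <;> simp_all

namespace AddMonoidAlgebra

theorem coeff_aeval_mul {R G : Type*} [CommRing R] [AddCommMonoid G]
    (f : R[X]) (y z : AddMonoidAlgebra R G) (g : G) :
    (aeval y f * z).coeff g = ∑ m ∈ range (f.natDegree + 1), f.coeff m * (y ^ m * z).coeff g := by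
  rw [aeval_eq_sum_range, sum_mul, coeff_sum, Finsupp.finsetSum_apply]
  simp only [smul_mul_assoc, coeff_smul_apply, smul_eq_mul]

theorem coeff_single_one_pow {R G : Type*} [CommSemiring R] [AddMonoid G]
    (g : G) (t : ℕ) (h : G) [Decidable (t • g = h)] :
    ((single g (1 : R)) ^ t).coeff h = if t • g = h then 1 else 0 := by
  rw [single_pow, one_pow, coeff_single, Finsupp.single_apply]

open Classical in
theorem coeff_pow_mul_geom_sum_mul {N w : ℕ} (hwN : w ≤ N) (a b : ℕ) (k : ℤ) :
    (single (1 : ZMod N) (1 : ℤ) ^ a * (∑ j ∈ range w, single (1 : ZMod N) (1 : ℤ) ^ j) *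
      (single (1 : ZMod N) (1 : ℤ) ^ b - 1)).coeff (k : ZMod N) =
      (if HitsWindow N w (a + b) k then 1 else 0) - (if HitsWindow N w a k then 1 else 0) := by
  rw [← sum_ite_intCast_add_eq hwN, ← sum_ite_intCast_add_eq hwN, ← sum_sub_distrib,
    mul_sum, sum_mul, coeff_sum, Finsupp.finsetSum_apply]
  refine sum_congr rfl fun j _ => ?_
  rw [mul_sub, mul_one, ← pow_add, ← pow_add, coeff_sub, Finsupp.sub_apply,
    coeff_single_one_pow, coeff_single_one_pow]
  simp only [nsmul_eq_mul, mul_one]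
  push_cast
  simp only [add_right_comm]

end AddMonoidAlgebra

/-- Zhao–Zhang: for primes `p < q < r` and any integer `k`,
`Σ_{0 ≤ m ≤ φ(pq)} a_{pq}(m)·χ_k(m) = 0`. -/
theorem stmt_9 (p q r : ℕ) (hp : p.Prime) (hq : q.Prime) (hr : r.Prime)
    (hpq : p < q) (hqr : q < r) (k : ℤ) :
    ∑ m ∈ Finset.range ((p * q).totient + 1),
      (cyclotomic (p * q) ℤ).coeff m * chi p q r k (m : ℤ) = 0 := by
  have := Fact.mk hp
  have hrpq : ¬r ∣ p * q := by
    rw [hr.dvd_mul, Nat.prime_dvd_prime_iff_eq hr hp, Nat.prime_dvd_prime_iff_eq hr hq]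
    omega
  set x : AddMonoidAlgebra ℤ (ZMod (p * q)) := AddMonoidAlgebra.single 1 1
  have hx : x ^ (p * q) = 1 := by
    rw [AddMonoidAlgebra.single_pow, one_pow, nsmul_eq_mul, mul_one, ZMod.natCast_self,
      ← AddMonoidAlgebra.one_def]
  have hzero : (aeval (x ^ r) (cyclotomic (p * q) ℤ) *
      (aeval x (cyclotomic p ℤ) * (x ^ q - 1))).coeff (k : ZMod (p * q)) = 0 := by
    rw [← mul_assoc, aeval_pow_cyclotomic_mul_eq_zero hp hq hr hpq.ne hrpq hx, AddMonoidAlgebra.coeff_zero,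
      Finsupp.zero_apply]
  rw [AddMonoidAlgebra.coeff_aeval_mul, natDegree_cyclotomic] at hzero
  rw [← hzero]
  refine sum_congr rfl fun m _ => ?_
  rw [cyclotomic_prime ℤ p, map_sum, ← pow_mul, ← mul_assoc, mul_comm r]
  simp only [map_pow, aeval_X]
  rw [AddMonoidAlgebra.coeff_pow_mul_geom_sum_mul (by nlinarith [hq.two_le]), chi_eq_sub hp.two_le hpq]
  norm_cast
end

section
/- If v ≡ w (mod p), then [v] = [w], where for an integer v, [v] is the unique integer in [0, q-1] such that there exists s ∈ ℤ with ([v]p + vq)r + q < i + 1 + spq ≤ ([v]p + vq)r + p + q. -/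
/-! The offset `i + 1 + s p q - (([v] p + v q) r + q)` lies in `(0, p]`, and modulo `p` it depends
on `v` only through `v mod p`; so congruent `v ≡ w` give equal offsets. Writing `w = v + p k` and
cancelling `p`, this says `([v] - [w] - k q) r = (s - t) q`, hence `q ∣ ([v] - [w]) r`. As `q < r`
with `r` prime, `q` is coprime to `r`, so `q ∣ [v] - [w]`, which forces `[v] = [w]` in `[0, q - 1]`. -/

theorem Int.eq_of_modEq_of_abs_sub_lt {n a b : ℤ} (h : a ≡ b [ZMOD n]) (hab : |a - b| < n) :
    a = b :=
  sub_eq_zero.mp (Int.eq_zero_of_abs_lt_dvd h.symm.dvd hab)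

theorem sub_eq_sub_of_modEq_of_window {p q a x y s t : ℤ} (hxy : x ≡ y [ZMOD p])
    (hx : x + q < a + s * p * q ∧ a + s * p * q ≤ x + p + q)
    (hy : y + q < a + t * p * q ∧ a + t * p * q ≤ y + p + q) :
    x - s * p * q = y - t * p * q := by
  have hoffset : a + s * p * q - q - x ≡ a + t * p * q - q - y [ZMOD p] := by
    refine Int.modEq_iff_dvd.mpr ?_
    have hdiff : a + t * p * q - q - y - (a + s * p * q - q - x) = p * ((t - s) * q) - (y - x) := by
      ring
    rw [hdiff]
    exact dvd_sub (dvd_mul_right _ _) hxy.dvd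
  have := Int.eq_of_modEq_of_abs_sub_lt hoffset (abs_lt.mpr ⟨by linarith, by linarith⟩)
  linarith

theorem dvd_sub_mul_of_window_shift_eq {p q r u u' v w s t : ℤ} (hp : p ≠ 0)
    (hvw : v ≡ w [ZMOD p])
    (h : (u * p + v * q) * r - s * p * q = (u' * p + w * q) * r - t * p * q) :
    q ∣ (u - u') * r := by
  obtain ⟨k, hk⟩ := hvw.dvd
  have hcancel : p * ((u - u') * r) = p * (q * (s - t + k * r)) := by
    linear_combination h + q * r * hk
  exact ⟨_, mul_left_cancel₀ hp hcancel⟩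

theorem stmt_11_general (p q r : ℕ) (hr : r.Prime)
    (hqr : q < r) (i v w : ℤ)
    (hvw : v ≡ w [ZMOD p]) (uv uw : ℤ)
    (huv : 0 ≤ uv ∧ uv ≤ q - 1 ∧ ∃ s : ℤ,
      (uv * p + v * q) * r + q < i + 1 + s * p * q ∧
      i + 1 + s * p * q ≤ (uv * p + v * q) * r + p + q)
    (huw : 0 ≤ uw ∧ uw ≤ q - 1 ∧ ∃ s : ℤ,
      (uw * p + w * q) * r + q < i + 1 + s * p * q ∧
      i + 1 + s * p * q ≤ (uw * p + w * q) * r + p + q) :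
    uv = uw := by
  obtain ⟨hv0, hv1, s, hs⟩ := huv
  obtain ⟨hw0, hw1, t, ht⟩ := huw
  have hp : (p : ℤ) ≠ 0 := by linarith [hs.1, hs.2]
  have hq : 0 < q := by omega
  have hX : (uv * p + v * q) * r ≡ (uw * p + w * q) * r [ZMOD p] :=
    (((Int.modEq_zero_iff_dvd.mpr (dvd_mul_left _ uv)).trans
      (Int.modEq_zero_iff_dvd.mpr (dvd_mul_left _ uw)).symm).add (hvw.mul_right _)).mul_right _
  have hdvd : (q : ℤ) ∣ (uv - uw) * r :=
    dvd_sub_mul_of_window_shift_eq hp hvw (sub_eq_sub_of_modEq_of_window hX hs ht)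
  have hcop : IsCoprime (q : ℤ) r :=
    ((hr.coprime_iff_not_dvd.mpr (Nat.not_dvd_of_pos_of_lt hq hqr)).symm).isCoprime
  exact Int.eq_of_modEq_of_abs_sub_lt (Int.modEq_iff_dvd.mpr (hcop.dvd_of_dvd_mul_right hdvd)).symm
    (abs_lt.mpr ⟨by linarith, by linarith⟩)

/-- Let `p < q < r` be primes and `i` a fixed integer. If `v ≡ w (mod p)` then
`[v] = [w]`, where `[v]` is the unique integer `uv ∈ [0, q-1]` such that
`([v] p + v q) r + q < i + 1 + s p q ≤ ([v] p + v q) r + p + q` for some `s ∈ ℤ`. -/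
theorem stmt_11 (p q r : ℕ) (hp : p.Prime) (hq : q.Prime) (hr : r.Prime)
    (hpq : p < q) (hqr : q < r) (i v w : ℤ)
    (hvw : v ≡ w [ZMOD p]) (uv uw : ℤ)
    (huv : 0 ≤ uv ∧ uv ≤ q - 1 ∧ ∃ s : ℤ,
      (uv * p + v * q) * r + q < i + 1 + s * p * q ∧
      i + 1 + s * p * q ≤ (uv * p + v * q) * r + p + q)
    (huw : 0 ≤ uw ∧ uw ≤ q - 1 ∧ ∃ s : ℤ,
      (uw * p + w * q) * r + q < i + 1 + s * p * q ∧
      i + 1 + s * p * q ≤ (uw * p + w * q) * r + p + q) :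
    uv = uw :=
  stmt_11_general p q r hr hqr i v w hvw uv uw huv huw
end
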